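/- Let K be a field, t ∈ K with t^2 - 4 ≠ 0 and t^2 - 4 not a square in K, a ∈ K with a ≠ ±2, and suppose a is the trace of a matrix in the group S(t,K) of determinant-1 matrices commuting with D_t. If ã ∈ K satisfies C_m(ã) = a for some natural number m (where C_m is the Chebyshev polynomial of the first kind), then there exists a matrix in S(t,K) with trace ã; likewise, for every natural s there is a matrix in S(t,K) with trace C_s(a). -/
import Mathlib


/-- Chebyshev polynomial of the first kind (rescaled): C 0 = 2, C 1 = x. -/
def chebC {K : Type*} [CommRing K] (x : K) : ℕ → K
  | 0 => 2
  | 1 => x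
  | n + 2 => x * chebC x (n + 1) - chebC x n

/-- Chebyshev polynomial of the second kind: U 0 = 0, U 1 = 1. -/
def chebU {K : Type*} [CommRing K] (x : K) : ℕ → K
  | 0 => 0
  | 1 => 1
  | n + 2 => x * chebU x (n + 1) - chebU x n

lemma cheb_key {K : Type*} [CommRing K] (x : K) : ∀ n : ℕ,
    (chebC x n)^2 - (x^2-4)*(chebU x n)^2 = 4 ∧
    (chebC x (n+1))^2 - (x^2-4)*(chebU x (n+1))^2 = 4 ∧
    chebC x n * chebC x (n+1) - (x^2-4)*(chebU x n * chebU x (n+1)) = 2*x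
  | 0 => by
    refine ⟨?_, ?_, ?_⟩ <;> simp [chebC, chebU] <;> ring
  | n+1 => by
    obtain ⟨h1, h2, h3⟩ := cheb_key x n
    refine ⟨h2, ?_, ?_⟩
    · show (x * chebC x (n+1) - chebC x n)^2 -
        (x^2-4)*(x * chebU x (n+1) - chebU x n)^2 = 4
      linear_combination (x^2) * h2 + h1 - 2*x*h3
    · show chebC x (n+1) * (x * chebC x (n+1) - chebC x n) -
        (x^2-4)*(chebU x (n+1) * (x * chebU x (n+1) - chebU x n)) = 2*x
      linear_combination x * h2 - h3

lemma cheb_sq {K : Type*} [CommRing K] (x : K) (n : ℕ) :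
    (chebC x n)^2 - (x^2-4)*(chebU x n)^2 = 4 := (cheb_key x n).1

lemma realize_trace {K : Type*} [Field K] (t : K) (h2 : (2:K) ≠ 0) (b q : K)
    (h : b^2 - 4 = (t^2-4)*q^2) :
    ∃ N : Matrix (Fin 2) (Fin 2) K,
      N * !![0, -1; 1, t] = !![0, -1; 1, t] * N ∧ N.det = 1 ∧ N.trace = b := by
  refine ⟨!![(b+q*t)/2, q; -q, (b-q*t)/2], ?_, ?_, ?_⟩
  · ext i j
    fin_cases i <;> fin_cases j <;>
      simp [Matrix.mul_apply, Fin.sum_univ_two] <;> field_simp <;> ring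
  · rw [Matrix.det_fin_two_of]
    field_simp
    linear_combination h
  · rw [Matrix.trace_fin_two]
    simp
    field_simp
    ring

theorem traces_in_special_sequence_group (K : Type*) [Field K]
    (t : K) (ht : t ^ 2 - 4 ≠ 0) (hns : ¬ IsSquare (t ^ 2 - 4))
    (D : Matrix (Fin 2) (Fin 2) K) (hD : D = !![0, -1; 1, t])
    (a : K) (ha2 : a ≠ 2) (ha2' : a ≠ -2)
    (hex : ∃ M : Matrix (Fin 2) (Fin 2) K, M * D = D * M ∧ M.det = 1 ∧ M.trace = a) :
    (∀ (m : ℕ) (atil : K), chebC atil m = a →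
      ∃ N : Matrix (Fin 2) (Fin 2) K, N * D = D * N ∧ N.det = 1 ∧ N.trace = atil) ∧
    (∀ s : ℕ,
      ∃ N : Matrix (Fin 2) (Fin 2) K, N * D = D * N ∧ N.det = 1 ∧ N.trace = chebC a s) := by
  subst hD
  -- characteristic ≠ 2
  have h2 : (2:K) ≠ 0 := by
    intro h
    exact hns ⟨t, by linear_combination (-2:K) * h⟩
  have ha4 : a^2 - 4 ≠ 0 := by
    have hp : a + 2 ≠ 0 := fun h => ha2' (by linear_combination h)
    have hm : a - 2 ≠ 0 := sub_ne_zero.2 ha2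
    intro h
    exact mul_ne_zero hm hp (by linear_combination h)
  -- extract q₀ with a² - 4 = (t²-4) q₀²
  obtain ⟨M, hc, hdet, htr⟩ := hex
  have e1 := congrFun (congrFun hc 0) 0
  have e2 := congrFun (congrFun hc 0) 1
  simp [Matrix.mul_apply, Fin.sum_univ_two] at e1 e2
  rw [Matrix.det_fin_two] at hdet
  rw [Matrix.trace_fin_two] at htr
  set p := M 0 0
  set q := M 0 1
  set r := M 1 0
  set s := M 1 1
  have hq0 : a^2 - 4 = (t^2-4) * q^2 := by
    linear_combination (-(a+p+s)) * htr + 4 * hdet + 4*q * e1 + (-(p-s+q*t)) * e2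
  constructor
  · intro m atil hC
    have hid := cheb_sq atil m
    rw [hC] at hid
    set u := chebU atil m with hu_def
    have hu : u ≠ 0 := by
      intro h
      rw [h] at hid
      exact ha4 (by linear_combination hid)
    have key : atil^2 - 4 = (t^2-4) * (q/u)^2 := by
      field_simp
      linear_combination (-1 : K) * hid + hq0
    exact realize_trace t h2 atil (q/u) key
  · intro s'
    have hid := cheb_sq a s'
    have key : (chebC a s')^2 - 4 = (t^2-4) * (q * chebU a s')^2 := by
      linear_combination hid + (chebU a s')^2 * hq0
    exact realize_trace t h2 (chebC a s') (q * chebU a s') key
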